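/- Let (W,S) be a Coxeter system, I ⊂ K, J ⊂ L finitary subsets of S, and π : W_I\W/W_J → W_K\W/W_L the quotient map. Then for any (K,L)-coset q, the preimage π⁻¹({p' : p' ≤ q}) equals the downward closure of π⁻¹(q) in the Bruhat order on (I,J)-cosets; that is, π(p) ≤ q if and only if there exists p' with π(p') = q and p ≤ p'. -/

import Mathlib

namespace CoxeterPaper

open CoxeterSystem

variable {B : Type*} {W : Type*} [Group W] {M : CoxeterMatrix B}

/-- The Bruhat order on a Coxeter group: the reflexive-transitive closure of the
relation `a < a * t` for `t` a reflection with length increasing. -/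
def BruhatLE (cs : CoxeterSystem M W) (x y : W) : Prop :=
  Relation.ReflTransGen
    (fun a b => (∃ t, cs.IsReflection t ∧ b = a * t) ∧ cs.length a < cs.length b) x y

/-- One step of the Demazure product with a simple reflection. -/
noncomputable def demStep (cs : CoxeterSystem M W) (x : W) (i : B) : W :=
  if cs.length x < cs.length (x * cs.simple i) then x * cs.simple i else x

/-- The Demazure product of `x` with the word `l`. -/
noncomputable def demWord (cs : CoxeterSystem M W) (x : W) (l : List B) : W :=
  l.foldl (demStep cs) x

/-- The Demazure product (Coxeter monoid product) of two elements: fold the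
Demazure action of a reduced word of `y` onto `x`. -/
noncomputable def dem (cs : CoxeterSystem M W) (x y : W) : W :=
  demWord cs x (Classical.choose (cs.exists_reduced_word y))

/-- The standard parabolic subgroup attached to a set of simple indices. -/
def parabolic (cs : CoxeterSystem M W) (I : Set B) : Subgroup W :=
  Subgroup.closure (cs.simple '' I)

/-- `I` is finitary if the parabolic subgroup `W_I` is finite. -/
def Finitary (cs : CoxeterSystem M W) (I : Set B) : Prop :=
  (parabolic cs I : Set W).Finite

/-- The double coset `W_I w W_J` as a subset of `W`. -/
def doset (cs : CoxeterSystem M W) (I J : Set B) (w : W) : Set W :=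
  {x | ∃ a ∈ parabolic cs I, ∃ b ∈ parabolic cs J, x = a * w * b}

/-- `p` is an `(I,J)`-double coset. -/
def IsDCoset (cs : CoxeterSystem M W) (I J : Set B) (p : Set W) : Prop :=
  ∃ w, p = doset cs I J w

/-- `m` is the Bruhat-minimal element of `p`. -/
def IsMinOf (cs : CoxeterSystem M W) (p : Set W) (m : W) : Prop :=
  m ∈ p ∧ ∀ x ∈ p, BruhatLE cs m x

/-- `m` is the Bruhat-maximal element of `p`. -/
def IsMaxOf (cs : CoxeterSystem M W) (p : Set W) (m : W) : Prop :=
  m ∈ p ∧ ∀ x ∈ p, BruhatLE cs x m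

/-- `[I 0, …, I d]` is a singlestep expression. -/
def IsSinglestep (I : ℕ → Set B) (d : ℕ) : Prop :=
  ∀ k < d, (∃ s, s ∉ I k ∧ I (k + 1) = insert s (I k)) ∨
    (∃ s, s ∈ I k ∧ I (k + 1) = I k \ {s})

/-- `p` is a path subordinate to the singlestep expression `[I 0, …, I d]`. -/
def IsSubPath (cs : CoxeterSystem M W) (I : ℕ → Set B) (d : ℕ) (p : ℕ → Set W) : Prop :=
  p 0 = doset cs (I 0) (I 0) 1 ∧
  (∀ i ≤ d, IsDCoset cs (I 0) (I i) (p i)) ∧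
  ∀ k < d, (I k ⊆ I (k + 1) → p k ⊆ p (k + 1)) ∧ (I (k + 1) ⊆ I k → p (k + 1) ⊆ p k)

/-- The Demazure product `w_{I_0} * w_{I_1} * ⋯ * w_{I_d}` of the longest elements
`wI 0, …, wI d`. -/
noncomputable def exprMax (cs : CoxeterSystem M W) (wI : ℕ → W) (d : ℕ) : W :=
  ((List.range d).map fun k => wI (k + 1)).foldl (dem cs) (wI 0)

/-!
Everything rests on the lifting property of the Bruhat order: if `x ≤ u` then `x s ≤ u` or
`x s ≤ u s`, and `x ≤ u s` or `x s ≤ u s`, for every simple reflection `s`, on either side.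
It comes from the subword property, and that from the strong exchange condition, which is proved
with Tits' reflection cocycle.

Pushing an element of a double coset `W_K x W_L` down along its descents in `K` and `L` and
lifting back then gives two facts, by induction on length: the Bruhat-minimal element of the
coset is monotone in `x`, and if `min (W_K x W_L) ≤ m` then some element of `W_K m W_L` lies
above `x`. Given `π p ≤ q`, the second fact lifts `min p` to some `z ∈ q`, and monotonicity of
the `(I,J)`-minimum gives `p ≤ p'` for the `(I,J)`-coset `p'` of `z`. Conversely, `min p` lies
in `π p`, so `p ≤ p'` with `π p' = q` gives `π p ≤ q` by monotonicity of the `(K,L)`-minimum.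
-/

section Development

variable (cs : CoxeterSystem M W)

local prefix:100 "s" => cs.simple
local prefix:100 "π" => cs.wordProd
local prefix:100 "ℓ" => cs.length
local prefix:100 "ris " => cs.rightInvSeq
local infix:50 " ≤ᴮ " => BruhatLE cs

section BruhatOrder

variable {cs}

@[refl]
theorem BruhatLE.refl (x : W) : x ≤ᴮ x := Relation.ReflTransGen.refl

theorem BruhatLE.trans {x y z : W} (h : x ≤ᴮ y) (h' : y ≤ᴮ z) : x ≤ᴮ z :=
  Relation.ReflTransGen.trans h h'

theorem bruhatLE_mul_of_isReflection {x t : W} (ht : cs.IsReflection t)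
    (hl : ℓ x < ℓ (x * t)) : x ≤ᴮ x * t :=
  Relation.ReflTransGen.single ⟨⟨t, ht, rfl⟩, hl⟩

theorem bruhatLE_mul_simple {x : W} {i : B} (h : ¬ cs.IsRightDescent x i) : x ≤ᴮ x * s i :=
  bruhatLE_mul_of_isReflection (cs.isReflection_simple i)
    (by have := cs.not_isRightDescent_iff.mp h; omega)

theorem mul_simple_bruhatLE {x : W} {i : B} (h : cs.IsRightDescent x i) : x * s i ≤ᴮ x := by
  have := bruhatLE_mul_simple (cs.isRightDescent_iff_not_isRightDescent_mul.mp h)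
  rwa [cs.simple_mul_simple_cancel_right] at this

theorem BruhatLE.length_le {x y : W} (h : x ≤ᴮ y) : ℓ x ≤ ℓ y := by
  induction h with
  | refl => exact le_rfl
  | tail _ hstep ih => exact ih.trans hstep.2.le

theorem BruhatLE.eq_of_length_le {x y : W} (h : x ≤ᴮ y) (hl : ℓ y ≤ ℓ x) : x = y := by
  rcases h.cases_tail with h | ⟨z, hxz, hzy⟩
  · exact h.symm
  · have := BruhatLE.length_le hxz
    have := hzy.2
    omega

theorem BruhatLE.inv {x y : W} (h : x ≤ᴮ y) : x⁻¹ ≤ᴮ y⁻¹ := by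
  induction h with
  | refl => rfl
  | tail _ hstep ih =>
    rename_i b _ _
    obtain ⟨⟨t, ht, rfl⟩, hl⟩ := hstep
    refine ih.tail ⟨⟨b * t * b⁻¹, ht.conj b, by rw [mul_inv_rev, ht.inv]; group⟩, ?_⟩
    rwa [cs.length_inv, cs.length_inv]

theorem bruhatLE_inv_iff {x y : W} : x⁻¹ ≤ᴮ y⁻¹ ↔ x ≤ᴮ y :=
  ⟨fun h => by simpa using h.inv, BruhatLE.inv⟩

end BruhatOrder

section StrongExchange

open scoped Classical

/-- The action of `s i` on `W × ZMod 2` in Tits' construction of the reflection cocycle. -/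
noncomputable def simplePerm (i : B) : Equiv.Perm (W × ZMod 2) :=
  Function.Involutive.toPerm (fun p => (s i * p.1 * s i, p.2 + if p.1 = s i then 1 else 0))
    (by
      rintro ⟨t, e⟩
      have hfix : s i * (t * s i) = s i ↔ t = s i := by
        rw [mul_eq_left, mul_eq_one_iff_eq_inv, cs.inv_simple]
      simp only [Prod.mk.injEq, mul_assoc, cs.simple_mul_simple_cancel_left,
        cs.simple_mul_simple_cancel_right, hfix, true_and]
      split_ifs <;> simp [add_assoc, CharTwo.add_self_eq_zero])

theorem simplePerm_apply (i : B) (t : W) (e : ZMod 2) :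
    simplePerm cs i (t, e) = (s i * t * s i, e + if t = s i then 1 else 0) := rfl

theorem prod_map_simplePerm_apply (ω : List B) (t : W) (e : ZMod 2) :
    (ω.map (simplePerm cs)).prod (t, e) = (π ω * t * (π ω)⁻¹, e + (ris ω).count t) := by
  induction ω generalizing e with
  | nil => simp
  | cons i ω ih =>
    have hcond : π ω * t * (π ω)⁻¹ = s i ↔ (π ω)⁻¹ * s i * π ω = t := by
      constructor <;> intro h <;> rw [← h] <;> group
    simp only [List.map_cons, List.prod_cons, Equiv.Perm.mul_apply, ih, simplePerm_apply,
      rightInvSeq, List.count_cons, beq_iff_eq, hcond, cs.wordProd_cons, Prod.mk.injEq]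
    constructor
    · rw [mul_inv_rev, cs.inv_simple]
      group
    · push_cast
      ring

theorem prod_map_alternatingWord_two_mul {G : Type*} [Monoid G] (f : B → G) (i j : B) (m : ℕ) :
    ((alternatingWord i j (2 * m)).map f).prod = (f i * f j) ^ m := by
  induction m with
  | zero => simp [alternatingWord]
  | succ m ih =>
    rw [show 2 * (m + 1) = 2 * m + 1 + 1 by ring, alternatingWord_succ', alternatingWord_succ']
    simp [ih, pow_succ', mul_assoc]

theorem reverse_alternatingWord_two_mul (i j : B) (m : ℕ) :
    (alternatingWord i j (2 * m)).reverse = alternatingWord j i (2 * m) := by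
  apply List.ext_getElem (by simp)
  intro k h₁ h₂
  simp only [length_alternatingWord] at h₂
  rw [List.getElem_reverse, getElem_alternatingWord _ _ _ _ (by simp; omega),
    getElem_alternatingWord _ _ _ _ h₂]
  have hpar : Even (2 * m + (2 * m - 1 - k)) ↔ ¬ Even (2 * m + k) := by
    rw [Nat.even_iff, Nat.even_iff]
    omega
  by_cases h : Even (2 * m + k) <;> simp [hpar, h]

theorem wordProd_alternatingWord_two_mul_add_one (i j : B) (k : ℕ) :
    π (alternatingWord i j (2 * k + 1)) = s j * (s i * s j) ^ k := by
  rw [prod_alternatingWord_eq_mul_pow, if_neg (by simp), show (2 * k + 1) / 2 = k by omega]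

theorem even_count_rightInvSeq_braidWord (i j : B) (t : W) :
    Even ((ris (alternatingWord i j (2 * M i j))).count t) := by
  set m := M i j
  set g : ℕ → W := fun k => s j * (s i * s j) ^ k
  have hlis : cs.leftInvSeq (alternatingWord j i (2 * m)) = (List.range (m + m)).map g := by
    apply List.ext_getElem (by simp; ring)
    intro k h₁ h₂
    rw [cs.getElem_leftInvSeq_alternatingWord j i m k (by simpa using h₁), List.getElem_map,
      List.getElem_range, wordProd_alternatingWord_two_mul_add_one]
  have hper : ((List.range m).map (m + ·)).map g = (List.range m).map g := by
    rw [List.map_map]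
    refine List.map_congr_left fun k _ => ?_
    simp [g, pow_add, m]
  rw [← reverse_alternatingWord_two_mul, rightInvSeq_reverse, List.count_reverse, hlis,
    List.range_add, List.map_append, List.count_append, hper]
  exact ⟨_, rfl⟩

theorem isLiftable_simplePerm : M.IsLiftable (simplePerm cs) := by
  intro i j
  rw [← prod_map_alternatingWord_two_mul]
  refine Equiv.ext fun ⟨t, e⟩ => ?_
  obtain ⟨c, hc⟩ := even_count_rightInvSeq_braidWord cs i j t
  have hπ : π (alternatingWord i j (2 * M i j)) = 1 := by
    rw [prod_alternatingWord_eq_mul_pow, if_pos (by simp), Nat.mul_div_cancel_left _ two_pos,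
      simple_mul_simple_pow, one_mul]
  rw [prod_map_simplePerm_apply, hπ, hc]
  simp [CharTwo.add_self_eq_zero]

/-- Tits' representation of `W`; its second coordinate is the reflection cocycle. -/
noncomputable def reflectionRep : W →* Equiv.Perm (W × ZMod 2) :=
  cs.lift ⟨simplePerm cs, isLiftable_simplePerm cs⟩

theorem reflectionRep_wordProd (ω : List B) :
    reflectionRep cs (π ω) = (ω.map (simplePerm cs)).prod := by
  rw [wordProd, map_list_prod, List.map_map]
  congr 1
  exact List.map_congr_left fun i _ => cs.lift_apply_simple (isLiftable_simplePerm cs) i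

noncomputable def inversionParity (w t : W) : ZMod 2 := (reflectionRep cs w (t, 0)).2

theorem inversionParity_wordProd (ω : List B) (t : W) :
    inversionParity cs (π ω) t = (ris ω).count t := by
  simp [inversionParity, reflectionRep_wordProd, prod_map_simplePerm_apply]

theorem reflectionRep_apply (w t : W) (e : ZMod 2) :
    reflectionRep cs w (t, e) = (w * t * w⁻¹, e + inversionParity cs w t) := by
  obtain ⟨ω, rfl⟩ := cs.wordProd_surjective w
  rw [inversionParity_wordProd, reflectionRep_wordProd, prod_map_simplePerm_apply]

theorem inversionParity_mul (u v t : W) :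
    inversionParity cs (u * v) t = inversionParity cs v t + inversionParity cs u (v * t * v⁻¹) := by
  rw [inversionParity, inversionParity, map_mul, Equiv.Perm.mul_apply, reflectionRep_apply cs v,
    reflectionRep_apply cs u, zero_add]

theorem inversionParity_self {t : W} (ht : cs.IsReflection t) : inversionParity cs t t = 1 := by
  obtain ⟨w, i, rfl⟩ := ht
  have h₁ := inversionParity_mul cs (w * s i) w⁻¹ (w * s i * w⁻¹)
  have h₂ := inversionParity_mul cs w (s i) (s i)
  have h₃ := inversionParity_mul cs w w⁻¹ (w * s i * w⁻¹)
  have h₀ : inversionParity cs 1 (w * s i * w⁻¹) = 0 := by simp [inversionParity]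
  rw [show w⁻¹ * (w * s i * w⁻¹) * w⁻¹⁻¹ = s i by group] at h₁ h₃
  have hs : inversionParity cs (s i) (s i) = 1 := by
    simpa using inversionParity_wordProd cs [i] (s i)
  simp only [inv_simple, simple_mul_simple_cancel_right, mul_inv_cancel, hs] at h₁ h₂ h₃
  linear_combination h₁ + h₂ - h₃ + h₀

theorem isRightInversion_of_inversionParity_eq_one {w t : W}
    (h : inversionParity cs w t = 1) : cs.IsRightInversion w t := by
  obtain ⟨ω, hω, rfl⟩ := cs.exists_isReduced w
  rw [inversionParity_wordProd] at h
  have hmem : t ∈ ris ω := List.count_pos_iff.mp (Nat.pos_of_ne_zero fun h0 => by simp [h0] at h)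
  exact cs.isRightInversion_of_mem_rightInvSeq hω hmem

theorem inversionParity_eq_one_of_isRightInversion {w t : W} (h : cs.IsRightInversion w t) :
    inversionParity cs w t = 1 := by
  obtain ⟨ht, hl⟩ := h
  have hw : w = w * t * t := by rw [mul_assoc, ht.mul_self, mul_one]
  have hv : inversionParity cs (w * t) t = 0 := by
    by_contra hne
    have := (isRightInversion_of_inversionParity_eq_one cs (Fin.eq_one_of_ne_zero _ hne)).2
    rw [← hw] at this
    omega
  rw [hw, inversionParity_mul, mul_inv_cancel_right, hv, inversionParity_self cs ht, add_zero]

theorem mem_rightInvSeq_of_isRightInversion {ω : List B} {t : W}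
    (h : cs.IsRightInversion (π ω) t) : t ∈ ris ω := by
  have := inversionParity_eq_one_of_isRightInversion cs h
  rw [inversionParity_wordProd] at this
  exact List.count_pos_iff.mp (Nat.pos_of_ne_zero fun h0 => by simp [h0] at this)

theorem exists_wordProd_eraseIdx_eq_mul {ω : List B} {t : W}
    (h : cs.IsRightInversion (π ω) t) : ∃ j < ω.length, π (ω.eraseIdx j) = π ω * t := by
  obtain ⟨j, hj, rfl⟩ := List.mem_iff_getElem.mp (mem_rightInvSeq_of_isRightInversion cs h)
  rw [length_rightInvSeq] at hj
  refine ⟨j, hj, ?_⟩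
  rw [← wordProd_mul_getD_rightInvSeq, List.getD_eq_getElem]

end StrongExchange

section Subwords

theorem exists_reduced_sublist (ω : List B) :
    ∃ κ, κ.Sublist ω ∧ cs.IsReduced κ ∧ π κ = π ω := by
  induction ω using List.reverseRecOn with
  | nil => exact ⟨[], List.Sublist.refl _, by simp [CoxeterSystem.IsReduced], rfl⟩
  | append_singleton ω a ih =>
    obtain ⟨κ, hκ, hred, hπ⟩ := ih
    rw [wordProd_append, wordProd_singleton, ← hπ]
    by_cases ha : cs.IsRightDescent (π κ) a
    · obtain ⟨j, hj, hκj⟩ := exists_wordProd_eraseIdx_eq_mul cs ⟨cs.isReflection_simple a, ha⟩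
      refine ⟨κ.eraseIdx j,
        (List.eraseIdx_sublist κ j).trans (hκ.trans (List.sublist_append_left _ _)), ?_, hκj⟩
      have := (cs.isRightDescent_iff).mp ha
      rw [CoxeterSystem.IsReduced, hκj, List.length_eraseIdx_of_lt hj]
      unfold CoxeterSystem.IsReduced at hred
      omega
    · refine ⟨κ ++ [a], hκ.append (List.Sublist.refl _), ?_,
        by rw [wordProd_append, wordProd_singleton]⟩
      have := (cs.not_isRightDescent_iff).mp ha
      rw [CoxeterSystem.IsReduced, wordProd_append, wordProd_singleton, List.length_append,
        List.length_singleton]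
      unfold CoxeterSystem.IsReduced at hred
      omega

theorem exists_reduced_sublist_of_bruhatLE {x : W} {ω : List B} (h : x ≤ᴮ π ω) :
    ∃ κ, κ.Sublist ω ∧ cs.IsReduced κ ∧ π κ = x := by
  generalize hy : π ω = y at h
  induction h generalizing ω with
  | refl => exact hy ▸ exists_reduced_sublist cs ω
  | @tail b c _ hstep ih =>
    obtain ⟨⟨t, ht, rfl⟩, hl⟩ := hstep
    have hb : π ω * t = b := by rw [hy, mul_assoc, ht.mul_self, mul_one]
    obtain ⟨j, -, hj⟩ := exists_wordProd_eraseIdx_eq_mul cs ⟨ht, by rwa [hb, hy]⟩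
    obtain ⟨κ, hκ, hred, hκx⟩ := ih (hj.trans hb)
    exact ⟨κ, hκ.trans (List.eraseIdx_sublist ω j), hred, hκx⟩

end Subwords

section Lifting

def LiftsAscents (u : W) : Prop :=
  ∀ x i, x ≤ᴮ u → ¬ cs.IsRightDescent u i → x * s i ≤ᴮ u * s i

def SubwordsBelow (u : W) : Prop :=
  ∀ ω κ : List B, cs.IsReduced ω → π ω = u → κ.Sublist ω → π κ ≤ᴮ u

variable {cs}

theorem BruhatLE.le_mul_simple_of_subwordsBelow {x u : W} {i : B}
    (hB : SubwordsBelow cs (u * s i)) (hxu : x ≤ᴮ u) (hx : ¬ cs.IsRightDescent x i) :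
    x ≤ᴮ u * s i := by
  obtain ⟨κ, hκ, hκu⟩ := cs.exists_isReduced (u * s i)
  have hω : u = π (κ ++ [i]) := by
    rw [wordProd_append, wordProd_singleton, ← hκu, simple_mul_simple_cancel_right]
  obtain ⟨κ', hsub, hred, rfl⟩ := exists_reduced_sublist_of_bruhatLE cs (hω ▸ hxu)
  obtain ⟨l₁, l₂, rfl, hl₁, hl₂⟩ := List.sublist_append_iff.mp hsub
  rcases List.sublist_singleton.mp hl₂ with rfl | rfl
  · rw [List.append_nil]
    exact hB κ l₁ hκ hκu.symm hl₁
  · refine absurd ?_ hx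
    have := cs.length_wordProd_le l₁
    unfold CoxeterSystem.IsReduced at hred
    rw [IsRightDescent, hred, wordProd_append, wordProd_singleton, simple_mul_simple_cancel_right,
      List.length_append, List.length_singleton]
    omega

theorem BruhatLE.mul_simple_le_of_liftsAscents {x u : W} {i : B}
    (hL : LiftsAscents cs (u * s i)) (hB : SubwordsBelow cs (u * s i)) (hxu : x ≤ᴮ u)
    (hx : ¬ cs.IsRightDescent x i) (hu : cs.IsRightDescent u i) : x * s i ≤ᴮ u := by
  have := hL x i (hxu.le_mul_simple_of_subwordsBelow hB hx)
    (cs.isRightDescent_iff_not_isRightDescent_mul.mp hu)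
  rwa [simple_mul_simple_cancel_right] at this

theorem liftsAscents_of_forall_length_lt {u : W}
    (ih : ∀ v, ℓ v < ℓ u → LiftsAscents cs v ∧ SubwordsBelow cs v) : LiftsAscents cs u := by
  intro x i hxu hu
  by_cases hx : cs.IsRightDescent x i
  · exact (mul_simple_bruhatLE hx).trans (hxu.trans (bruhatLE_mul_simple hu))
  rcases hxu.cases_tail with rfl | ⟨z, hxz, ⟨t, ht, rfl⟩, hzt⟩
  · rfl
  by_cases hz : cs.IsRightDescent z i
  · obtain ⟨hL, hB⟩ := ih (z * s i) (hz.trans hzt)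
    exact (BruhatLE.mul_simple_le_of_liftsAscents hL hB hxz hx hz).trans
      ((bruhatLE_mul_of_isReflection ht hzt).trans (bruhatLE_mul_simple hu))
  · have heq : z * s i * (s i * t * (s i)⁻¹) = z * t * s i := by simp [mul_assoc]
    have hlt : ℓ (z * s i) < ℓ (z * t * s i) := by
      have := cs.not_isRightDescent_iff.mp hz
      have := cs.not_isRightDescent_iff.mp hu
      omega
    have hstep := bruhatLE_mul_of_isReflection (ht.conj (s i)) (heq ▸ hlt)
    exact ((ih z hzt).1 x i hxz hz).trans (heq ▸ hstep)

theorem subwordsBelow_of_forall_length_lt {u : W}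
    (ih : ∀ v, ℓ v < ℓ u → LiftsAscents cs v ∧ SubwordsBelow cs v) : SubwordsBelow cs u := by
  intro ω κ hω hωu hκ
  rcases List.eq_nil_or_concat ω with rfl | ⟨ω₀, a, rfl⟩
  · rw [List.sublist_nil.mp hκ, ← hωu]
  rw [List.concat_eq_append] at hω hκ hωu
  have hω₀ : cs.IsReduced ω₀ := by simpa using hω.take ω₀.length
  have ha : ℓ (π ω₀ * s a) = ℓ (π ω₀) + 1 := by
    unfold CoxeterSystem.IsReduced at hω hω₀
    rw [← wordProd_singleton, ← wordProd_append, hω, hω₀, List.length_append, List.length_singleton]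
  have hv : ℓ (π ω₀) < ℓ u := by
    rw [← hωu, wordProd_append, wordProd_singleton, ha]
    omega
  have ha' : ¬ cs.IsRightDescent (π ω₀) a := cs.not_isRightDescent_iff.mpr ha
  rw [← hωu, wordProd_append, wordProd_singleton]
  obtain ⟨l₁, l₂, rfl, hl₁, hl₂⟩ := List.sublist_append_iff.mp hκ
  have hl₁ω₀ := (ih _ hv).2 ω₀ l₁ hω₀ rfl hl₁
  rcases List.sublist_singleton.mp hl₂ with rfl | rfl
  · rw [List.append_nil]
    exact hl₁ω₀.trans (bruhatLE_mul_simple ha')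
  · rw [wordProd_append, wordProd_singleton]
    exact (ih _ hv).1 _ a hl₁ω₀ ha'

variable (cs) in
theorem liftsAscents_and_subwordsBelow (u : W) : LiftsAscents cs u ∧ SubwordsBelow cs u := by
  induction hn : ℓ u using Nat.strong_induction_on generalizing u with
  | _ n ih =>
    have ih' : ∀ v, ℓ v < ℓ u → LiftsAscents cs v ∧ SubwordsBelow cs v :=
      fun v hv => ih _ (hn ▸ hv) v rfl
    exact ⟨liftsAscents_of_forall_length_lt ih', subwordsBelow_of_forall_length_lt ih'⟩

theorem BruhatLE.mul_simple_le_or {x u : W} (h : x ≤ᴮ u) (i : B) :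
    x * s i ≤ᴮ u ∨ x * s i ≤ᴮ u * s i := by
  by_cases hu : cs.IsRightDescent u i
  · by_cases hx : cs.IsRightDescent x i
    · exact .inl ((mul_simple_bruhatLE hx).trans h)
    · obtain ⟨hL, hB⟩ := liftsAscents_and_subwordsBelow cs (u * s i)
      exact .inl (h.mul_simple_le_of_liftsAscents hL hB hx hu)
  · exact .inr ((liftsAscents_and_subwordsBelow cs u).1 x i h hu)

theorem BruhatLE.le_mul_simple {x u : W} {i : B} (h : x ≤ᴮ u) (hx : ¬ cs.IsRightDescent x i) :
    x ≤ᴮ u * s i :=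
  h.le_mul_simple_of_subwordsBelow (liftsAscents_and_subwordsBelow cs (u * s i)).2 hx

theorem BruhatLE.le_mul_simple_or {x u : W} (h : x ≤ᴮ u) (i : B) :
    x ≤ᴮ u * s i ∨ x * s i ≤ᴮ u * s i := by
  by_cases hx : cs.IsRightDescent x i
  · exact .inr (((mul_simple_bruhatLE hx).trans h).le_mul_simple
      (cs.isRightDescent_iff_not_isRightDescent_mul.mp hx))
  · exact .inl (h.le_mul_simple hx)

theorem inv_mul_simple_eq (y : W) (i : B) : y⁻¹ * s i = (s i * y)⁻¹ := by
  rw [mul_inv_rev, inv_simple]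

theorem BruhatLE.simple_mul_le_or {x u : W} (h : x ≤ᴮ u) (i : B) :
    s i * x ≤ᴮ u ∨ s i * x ≤ᴮ s i * u := by
  simpa only [inv_mul_simple_eq, bruhatLE_inv_iff] using h.inv.mul_simple_le_or i

theorem BruhatLE.le_simple_mul_or {x u : W} (h : x ≤ᴮ u) (i : B) :
    x ≤ᴮ s i * u ∨ s i * x ≤ᴮ s i * u := by
  simpa only [inv_mul_simple_eq, bruhatLE_inv_iff] using h.inv.le_mul_simple_or i

theorem BruhatLE.le_simple_mul {x u : W} {i : B} (h : x ≤ᴮ u) (hx : ¬ cs.IsLeftDescent x i) :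
    x ≤ᴮ s i * u := by
  simpa only [inv_mul_simple_eq, bruhatLE_inv_iff] using
    h.inv.le_mul_simple (cs.isRightDescent_inv_iff.not.mpr hx)

end Lifting

section DoubleCosets

variable {cs}

theorem simple_mem_parabolic {I : Set B} {i : B} (hi : i ∈ I) : s i ∈ parabolic cs I :=
  Subgroup.subset_closure ⟨i, hi, rfl⟩

theorem parabolic_mono {I K : Set B} (h : I ⊆ K) : parabolic cs I ≤ parabolic cs K :=
  Subgroup.closure_mono (Set.image_mono h)

theorem exists_wordProd_eq_of_mem_parabolic {I : Set B} {a : W} (h : a ∈ parabolic cs I) :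
    ∃ ω : List B, (∀ i ∈ ω, i ∈ I) ∧ π ω = a := by
  induction h using Subgroup.closure_induction with
  | mem _ hg =>
    obtain ⟨i, hi, rfl⟩ := hg
    exact ⟨[i], by simpa using hi, wordProd_singleton cs i⟩
  | one => exact ⟨[], by simp, wordProd_nil cs⟩
  | mul _ _ _ _ ih₁ ih₂ =>
    obtain ⟨ω₁, h₁, rfl⟩ := ih₁
    obtain ⟨ω₂, h₂, rfl⟩ := ih₂
    exact ⟨ω₁ ++ ω₂, by simpa [or_imp, forall_and] using And.intro h₁ h₂, wordProd_append cs _ _⟩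
  | inv _ _ ih =>
    obtain ⟨ω, h, rfl⟩ := ih
    exact ⟨ω.reverse, by simpa using h, wordProd_reverse cs ω⟩

theorem self_mem_doset (I J : Set B) (w : W) : w ∈ doset cs I J w :=
  ⟨1, one_mem _, 1, one_mem _, by simp⟩

theorem mul_mem_doset {I J : Set B} {w x a b : W} (ha : a ∈ parabolic cs I)
    (hb : b ∈ parabolic cs J) (hx : x ∈ doset cs I J w) : a * x * b ∈ doset cs I J w := by
  obtain ⟨a', ha', b', hb', rfl⟩ := hx
  exact ⟨a * a', mul_mem ha ha', b' * b, mul_mem hb' hb, by group⟩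

theorem simple_mul_mem_doset {I J : Set B} {w x : W} {i : B} (hi : i ∈ I)
    (hx : x ∈ doset cs I J w) : s i * x ∈ doset cs I J w := by
  simpa using mul_mem_doset (simple_mem_parabolic hi) (one_mem _) hx

theorem mul_simple_mem_doset {I J : Set B} {w x : W} {j : B} (hj : j ∈ J)
    (hx : x ∈ doset cs I J w) : x * s j ∈ doset cs I J w := by
  simpa using mul_mem_doset (one_mem _) (simple_mem_parabolic hj) hx

theorem doset_eq_of_mem {I J : Set B} {w x : W} (hx : x ∈ doset cs I J w) :
    doset cs I J x = doset cs I J w := by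
  obtain ⟨a, ha, b, hb, rfl⟩ := hx
  ext y
  constructor
  · rintro ⟨a', ha', b', hb', rfl⟩
    exact ⟨a' * a, mul_mem ha' ha, b * b', mul_mem hb hb', by group⟩
  · rintro ⟨a', ha', b', hb', rfl⟩
    exact ⟨a' * a⁻¹, mul_mem ha' (inv_mem ha), b⁻¹ * b', mul_mem (inv_mem hb) hb', by group⟩

theorem doset_mono {I J K L : Set B} (hIK : I ⊆ K) (hJL : J ⊆ L) (w : W) :
    doset cs I J w ⊆ doset cs K L w := by
  rintro x ⟨a, ha, b, hb, rfl⟩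
  exact ⟨a, parabolic_mono hIK ha, b, parabolic_mono hJL hb, rfl⟩

theorem BruhatLE.le_mul_wordProd {J : Set B} {d y : W} (hJ : ∀ j ∈ J, ¬ cs.IsRightDescent d j)
    (h : d ≤ᴮ y) {β : List B} (hβ : ∀ j ∈ β, j ∈ J) : d ≤ᴮ y * π β := by
  induction β generalizing y with
  | nil => simpa using h
  | cons j β ih =>
    rw [wordProd_cons, ← mul_assoc]
    exact ih (h.le_mul_simple (hJ j (hβ j (by simp)))) fun k hk => hβ k (by simp [hk])

theorem BruhatLE.le_wordProd_mul {I : Set B} {d y : W} (hI : ∀ i ∈ I, ¬ cs.IsLeftDescent d i)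
    (h : d ≤ᴮ y) {α : List B} (hα : ∀ i ∈ α, i ∈ I) : d ≤ᴮ π α * y := by
  induction α with
  | nil => simpa using h
  | cons i α ih =>
    rw [wordProd_cons, mul_assoc]
    exact (ih fun k hk => hα k (by simp [hk])).le_simple_mul (hI i (hα i (by simp)))

theorem isMinOf_doset_of_forall_not_isDescent {I J : Set B} {w d : W}
    (hd : d ∈ doset cs I J w) (hI : ∀ i ∈ I, ¬ cs.IsLeftDescent d i)
    (hJ : ∀ j ∈ J, ¬ cs.IsRightDescent d j) : IsMinOf cs (doset cs I J w) d := by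
  refine ⟨hd, fun x hx => ?_⟩
  rw [← doset_eq_of_mem hd] at hx
  obtain ⟨a, ha, b, hb, rfl⟩ := hx
  obtain ⟨α, hα, rfl⟩ := exists_wordProd_eq_of_mem_parabolic ha
  obtain ⟨β, hβ, rfl⟩ := exists_wordProd_eq_of_mem_parabolic hb
  rw [mul_assoc]
  exact ((BruhatLE.refl d).le_mul_wordProd hJ hβ).le_wordProd_mul hI hα

theorem isMinOf_self_or_exists_descent (I J : Set B) (w : W) :
    IsMinOf cs (doset cs I J w) w ∨ (∃ i ∈ I, cs.IsLeftDescent w i) ∨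
      ∃ j ∈ J, cs.IsRightDescent w j := by
  by_contra! h
  exact h.1 (isMinOf_doset_of_forall_not_isDescent (self_mem_doset I J w) h.2.1 h.2.2)

theorem exists_isMinOf_doset (I J : Set B) (w : W) : ∃ d, IsMinOf cs (doset cs I J w) d := by
  obtain ⟨d, hd, hmin⟩ := (measure cs.length).wf.has_min (doset cs I J w) ⟨w, self_mem_doset I J w⟩
  exact ⟨d, isMinOf_doset_of_forall_not_isDescent hd
    (fun i hi hdi => hmin _ (simple_mul_mem_doset hi hd) hdi)
    (fun j hj hdj => hmin _ (mul_simple_mem_doset hj hd) hdj)⟩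

theorem IsMinOf.eq {p : Set W} {m m' : W} (h : IsMinOf cs p m) (h' : IsMinOf cs p m') : m = m' :=
  (h.2 m' h'.1).eq_of_length_le (h'.2 m h.1).length_le

theorem IsMinOf.of_mem_doset {I J : Set B} {w x m : W} (h : IsMinOf cs (doset cs I J w) m)
    (hx : x ∈ doset cs I J w) : IsMinOf cs (doset cs I J x) m := by
  rwa [doset_eq_of_mem hx]

theorem IsMinOf.bruhatLE_of_bruhatLE {I J : Set B} {x y mx my : W}
    (hmx : IsMinOf cs (doset cs I J x) mx) (hmy : IsMinOf cs (doset cs I J y) my)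
    (hxy : x ≤ᴮ y) : mx ≤ᴮ my := by
  induction hn : ℓ y using Nat.strong_induction_on generalizing x y with
  | _ n ih =>
  rcases isMinOf_self_or_exists_descent I J y with hy | ⟨i, hi, hy⟩ | ⟨j, hj, hy⟩
  · rw [hmy.eq hy]
    exact (hmx.2 x (self_mem_doset I J x)).trans hxy
  · have hmy' := hmy.of_mem_doset (simple_mul_mem_doset hi (self_mem_doset I J y))
    rcases hxy.le_simple_mul_or i with h | h
    · exact ih _ (hn ▸ hy) hmx hmy' h rfl
    · exact ih _ (hn ▸ hy) (hmx.of_mem_doset (simple_mul_mem_doset hi (self_mem_doset I J x)))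
        hmy' h rfl
  · have hmy' := hmy.of_mem_doset (mul_simple_mem_doset hj (self_mem_doset I J y))
    rcases hxy.le_mul_simple_or j with h | h
    · exact ih _ (hn ▸ hy) hmx hmy' h rfl
    · exact ih _ (hn ▸ hy) (hmx.of_mem_doset (mul_simple_mem_doset hj (self_mem_doset I J x)))
        hmy' h rfl

theorem IsMinOf.exists_bruhatLE_mem_doset {K L : Set B} {x d m : W}
    (hd : IsMinOf cs (doset cs K L x) d) (hdm : d ≤ᴮ m) :
    ∃ z, x ≤ᴮ z ∧ z ∈ doset cs K L m := by
  induction hn : ℓ x using Nat.strong_induction_on generalizing x with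
  | _ n ih =>
  rcases isMinOf_self_or_exists_descent K L x with hx | ⟨i, hi, hx⟩ | ⟨j, hj, hx⟩
  · exact ⟨m, hx.eq hd ▸ hdm, self_mem_doset K L m⟩
  · obtain ⟨z, hz, hzm⟩ :=
      ih _ (hn ▸ hx) (hd.of_mem_doset (simple_mul_mem_doset hi (self_mem_doset K L x))) rfl
    rcases hz.simple_mul_le_or i with h | h <;> rw [simple_mul_simple_cancel_left] at h
    · exact ⟨z, h, hzm⟩
    · exact ⟨s i * z, h, simple_mul_mem_doset hi hzm⟩
  · obtain ⟨z, hz, hzm⟩ :=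
      ih _ (hn ▸ hx) (hd.of_mem_doset (mul_simple_mem_doset hj (self_mem_doset K L x))) rfl
    rcases hz.mul_simple_le_or j with h | h <;> rw [simple_mul_simple_cancel_right] at h
    · exact ⟨z, h, hzm⟩
    · exact ⟨z * s j, h, mul_simple_mem_doset hj hzm⟩

end DoubleCosets

end Development

theorem doset_quotient_preimage_downward_general (cs : CoxeterSystem M W) (I J K L : Set B)
    (hIK : I ⊆ K) (hJL : J ⊆ L)
    (w u mp mw mu : W)
    (hmp : IsMinOf cs (doset cs I J w) mp)
    (hmw : IsMinOf cs (doset cs K L w) mw)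
    (hmu : IsMinOf cs (doset cs K L u) mu) :
    BruhatLE cs mw mu ↔
      ∃ v mv, IsMinOf cs (doset cs I J v) mv ∧ doset cs K L v = doset cs K L u ∧
        BruhatLE cs mp mv := by
  have hmpw : mp ∈ doset cs K L w := doset_mono hIK hJL w hmp.1
  constructor
  · intro h
    obtain ⟨z, hpz, hzu⟩ := (hmw.of_mem_doset hmpw).exists_bruhatLE_mem_doset h
    obtain ⟨mv, hmv⟩ := exists_isMinOf_doset I J z
    refine ⟨z, mv, hmv, (doset_eq_of_mem hzu).trans (doset_eq_of_mem hmu.1), ?_⟩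
    exact (hmp.of_mem_doset hmp.1).bruhatLE_of_bruhatLE hmv hpz
  · rintro ⟨v, mv, hmv, hvu, hpv⟩
    have hmvu : mv ∈ doset cs K L u := hvu ▸ doset_mono hIK hJL v hmv.1
    exact (hmw.of_mem_doset hmw.1).bruhatLE_of_bruhatLE (hmu.of_mem_doset hmvu)
      ((hmw.2 mp hmpw).trans hpv)

/-- The preimage under the quotient map of the set `{≤ q}` is the downward
closure of the preimage of `q`: `π(p) ≤ q` iff there is `p'` with `π(p') = q`
and `p ≤ p'`. -/
theorem doset_quotient_preimage_downward (cs : CoxeterSystem M W) (I J K L : Set B)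
    (hIK : I ⊆ K) (hJL : J ⊆ L)
    (hI : Finitary cs I) (hJ : Finitary cs J) (hK : Finitary cs K) (hL : Finitary cs L)
    (w u mp mw mu : W)
    (hmp : IsMinOf cs (doset cs I J w) mp)
    (hmw : IsMinOf cs (doset cs K L w) mw)
    (hmu : IsMinOf cs (doset cs K L u) mu) :
    BruhatLE cs mw mu ↔
      ∃ v mv, IsMinOf cs (doset cs I J v) mv ∧ doset cs K L v = doset cs K L u ∧
        BruhatLE cs mp mv :=
  doset_quotient_preimage_downward_general cs I J K L hIK hJL w u mp mw mu hmp hmw hmu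

end CoxeterPaper
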